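/- Let δ ∈ (0,1) and define r > 0 by (2r)² = -ln(1-δ²). If two vectors s, s' ∈ ℝⁿ of reparametrized codewords satisfy ∑_{t=1}^n (sₜ - s'ₜ)² < (2r)², then the product Poisson output distributions with means sₜ² and s'ₜ² have total variation distance strictly less than δ. -/

import Mathlib

/-!
The total variation distance is bounded by the Bhattacharyya coefficient `F = ∑ √(p q)`:
writing `|p - q| = |√p - √q| (√p + √q)`, Cauchy–Schwarz gives
`(∑ |p - q|)² ≤ ∑ (√p - √q)² · ∑ (√p + √q)² = (2 - 2F)(2 + 2F)`,
i.e. `TV ≤ √(1 - F²)`.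
For Poisson laws `√(Pois(a²)(y) Pois(b²)(y)) = exp (-(a - b)² / 2) Pois(ab)(y)`, and the
coefficient is multiplicative over product laws, so `F² = exp (-∑ (sₜ - s'ₜ)²) > 1 - δ²`.
-/

open Finset Real

/-- The Poisson pmf with mean `lam`. -/
noncomputable def poissonPMF (lam : ℝ) (y : ℕ) : ℝ :=
  Real.exp (-lam) * lam ^ y / (Nat.factorial y)

section Bhattacharyya

variable {α : Type*}

theorem sq_sum_abs_sub_le_mul {p q : α → ℝ} (hp : ∀ y, 0 ≤ p y) (hq : ∀ y, 0 ≤ q y)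
    (S : Finset α) :
    (∑ y ∈ S, |p y - q y|) ^ 2 ≤
      (∑ y ∈ S, (√(p y) - √(q y)) ^ 2) * ∑ y ∈ S, (√(p y) + √(q y)) ^ 2 := by
  have hfactor : ∀ y, |p y - q y| = |√(p y) - √(q y)| * (√(p y) + √(q y)) := fun y => by
    rw [← abs_of_nonneg (add_nonneg (sqrt_nonneg (p y)) (sqrt_nonneg (q y))), ← abs_mul]
    congr 1
    linear_combination -sq_sqrt (hp y) + sq_sqrt (hq y)
  simp_rw [hfactor]
  simpa only [sq_abs] using sum_mul_sq_le_sq_mul_sq S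
    (fun y => |√(p y) - √(q y)|) (fun y => √(p y) + √(q y))

theorem tsum_abs_sub_le_two_mul_sqrt_one_sub_sq {p q : α → ℝ} {F : ℝ}
    (hp : ∀ y, 0 ≤ p y) (hq : ∀ y, 0 ≤ q y) (hp1 : HasSum p 1) (hq1 : HasSum q 1)
    (hF : HasSum (fun y => √(p y) * √(q y)) F) :
    ∑' y, |p y - q y| ≤ 2 * √(1 - F ^ 2) := by
  have hsq : ∀ ε : ℝ,
      HasSum (fun y => (√(p y) + ε * √(q y)) ^ 2) (1 + ε ^ 2 + 2 * ε * F) := fun ε => by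
    convert (hp1.add (hq1.mul_left (ε ^ 2))).add (hF.mul_left (2 * ε)) using 1
    · funext y
      linear_combination sq_sqrt (hp y) + ε ^ 2 * sq_sqrt (hq y)
    · ring
  have hminus : HasSum (fun y => (√(p y) - √(q y)) ^ 2) (2 - 2 * F) := by
    convert hsq (-1) using 1
    · funext y; ring
    · ring
  have hplus : HasSum (fun y => (√(p y) + √(q y)) ^ 2) (2 + 2 * F) := by
    convert hsq 1 using 1
    · funext y; ring
    · ring
  have hsummable : Summable fun y => |p y - q y| :=
    (hp1.summable.add hq1.summable).of_nonneg_of_le (fun y => abs_nonneg _)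
      fun y => (abs_sub _ _).trans_eq (by rw [abs_of_nonneg (hp y), abs_of_nonneg (hq y)])
  refine hsummable.tsum_le_of_sum_le fun S => ?_
  have hCS : (∑ y ∈ S, |p y - q y|) ^ 2 ≤ (2 - 2 * F) * (2 + 2 * F) :=
    (sq_sum_abs_sub_le_mul hp hq S).trans <|
      mul_le_mul (sum_le_hasSum S (fun y _ => sq_nonneg _) hminus)
        (sum_le_hasSum S (fun y _ => sq_nonneg _) hplus)
        (sum_nonneg fun y _ => sq_nonneg _) (hminus.nonneg fun y => sq_nonneg _)
  calc ∑ y ∈ S, |p y - q y| ≤ √((2 - 2 * F) * (2 + 2 * F)) :=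
        (le_abs_self _).trans (abs_le_sqrt hCS)
    _ = 2 * √(1 - F ^ 2) := by
      rw [show (2 - 2 * F) * (2 + 2 * F) = 2 ^ 2 * (1 - F ^ 2) by ring,
        sqrt_mul (by norm_num), sqrt_sq (by norm_num)]

end Bhattacharyya

theorem hasSum_fin_pi_prod {β : Type*} (n : ℕ) (f : Fin n → β → ℝ) (a : Fin n → ℝ)
    (hf : ∀ t y, 0 ≤ f t y) (ha : ∀ t, HasSum (f t) (a t)) :
    HasSum (fun y : Fin n → β => ∏ t, f t (y t)) (∏ t, a t) := by
  induction n with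
  | zero =>
    simp only [univ_eq_empty, prod_empty]
    exact hasSum_single default fun y hy => absurd (Subsingleton.elim y default) hy
  | succ n ih =>
    have htail := ih (fun t => f t.succ) (fun t => a t.succ)
      (fun t => hf t.succ) (fun t => ha t.succ)
    have hsummable :
        Summable fun x : β × (Fin n → β) => f 0 x.1 * ∏ t, f t.succ (x.2 t) := by
      apply (ha 0).summable.mul_of_nonneg htail.summable
      · exact hf 0
      · exact fun y => prod_nonneg fun t _ => hf t.succ (y t)
    have hpair := (ha 0).mul htail hsummable
    have hk := (Fin.consEquiv fun _ => β).symm.hasSum_iff.mpr hpair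
    simp only [Fin.prod_univ_succ]
    exact hk

theorem poissonPMF_nonneg {lam : ℝ} (h : 0 ≤ lam) (y : ℕ) : 0 ≤ poissonPMF lam y := by
  unfold poissonPMF; positivity

theorem hasSum_poissonPMF {lam : ℝ} (h : 0 ≤ lam) : HasSum (poissonPMF lam) 1 :=
  ProbabilityTheory.hasSum_one_poissonMeasure ⟨lam, h⟩

theorem sqrt_poissonPMF_sq_mul_sqrt_poissonPMF_sq {a b : ℝ} (ha : 0 ≤ a) (hb : 0 ≤ b)
    (y : ℕ) :
    √(poissonPMF (a ^ 2) y) * √(poissonPMF (b ^ 2) y) =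
      Real.exp (-(a - b) ^ 2 / 2) * poissonPMF (a * b) y := by
  have hexp : Real.exp (-a ^ 2) * Real.exp (-b ^ 2) =
      Real.exp (-(a - b) ^ 2 / 2) ^ 2 * Real.exp (-(a * b)) ^ 2 := by
    simp only [← Real.exp_add, ← Real.exp_nat_mul]
    congr 1
    push_cast
    ring
  rw [← sqrt_mul (poissonPMF_nonneg (sq_nonneg a) y), ← abs_of_nonneg (mul_nonneg
    (exp_pos _).le (poissonPMF_nonneg (mul_nonneg ha hb) y)), ← sqrt_sq_eq_abs]
  congr 1
  unfold poissonPMF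
  rw [div_mul_div_comm, mul_mul_mul_comm, hexp]
  ring

theorem hasSum_prod_poissonPMF {n : ℕ} {c : Fin n → ℝ} (hc : ∀ t, 0 ≤ c t) :
    HasSum (fun y : Fin n → ℕ => ∏ t, poissonPMF (c t) (y t)) 1 := by
  simpa using hasSum_fin_pi_prod n (fun t => poissonPMF (c t)) 1
    (fun t => poissonPMF_nonneg (hc t)) fun t => hasSum_poissonPMF (hc t)

theorem hasSum_sqrt_prod_poissonPMF_mul {n : ℕ} {s s' : Fin n → ℝ} (hs : ∀ t, 0 ≤ s t)
    (hs' : ∀ t, 0 ≤ s' t) :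
    HasSum (fun y : Fin n → ℕ =>
        √(∏ t, poissonPMF (s t ^ 2) (y t)) * √(∏ t, poissonPMF (s' t ^ 2) (y t)))
      (Real.exp (-(∑ t, (s t - s' t) ^ 2) / 2)) := by
  have hfactor : ∀ t, HasSum (fun y => √(poissonPMF (s t ^ 2) y) * √(poissonPMF (s' t ^ 2) y))
      (Real.exp (-(s t - s' t) ^ 2 / 2)) := fun t => by
    have h := (hasSum_poissonPMF (mul_nonneg (hs t) (hs' t))).mul_left
      (Real.exp (-(s t - s' t) ^ 2 / 2))
    rw [mul_one] at h
    simpa only [sqrt_poissonPMF_sq_mul_sqrt_poissonPMF_sq (hs t) (hs' t)] using h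
  convert hasSum_fin_pi_prod n _ _ (fun _ _ => by positivity) hfactor using 1
  · funext y
    rw [sqrt_prod _ fun t _ => poissonPMF_nonneg (sq_nonneg _) _,
      sqrt_prod _ fun t _ => poissonPMF_nonneg (sq_nonneg _) _, prod_mul_distrib]
  · rw [← exp_sum, ← sum_div, sum_neg_distrib]

theorem sqrt_one_sub_exp_neg_lt {δ A : ℝ} (hδ0 : 0 < δ) (hδ1 : δ < 1)
    (hA : A < -Real.log (1 - δ ^ 2)) : √(1 - Real.exp (-A)) < δ := by
  have hpos : 0 < 1 - δ ^ 2 := by nlinarith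
  have hexp : 1 - δ ^ 2 < Real.exp (-A) := by
    rw [← exp_log hpos]; exact exp_lt_exp.mpr (by linarith)
  rw [sqrt_lt' hδ0]
  linarith

theorem close_codewords_tv_lt_general (n : ℕ) (δ r : ℝ) (hδ0 : 0 < δ) (hδ1 : δ < 1)
    (hr2 : (2 * r) ^ 2 = -Real.log (1 - δ ^ 2))
    (s s' : Fin n → ℝ) (hs : ∀ t, 0 ≤ s t) (hs' : ∀ t, 0 ≤ s' t)
    (hclose : ∑ t, (s t - s' t) ^ 2 < (2 * r) ^ 2) :
    (1 / 2) * ∑' y : Fin n → ℕ,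
        |(∏ t, poissonPMF ((s t) ^ 2) (y t)) -
          ∏ t, poissonPMF ((s' t) ^ 2) (y t)| < δ := by
  set A := ∑ t, (s t - s' t) ^ 2
  have hF2 : Real.exp (-A / 2) ^ 2 = Real.exp (-A) := by rw [← exp_nat_mul]; congr 1; ring
  have htv := tsum_abs_sub_le_two_mul_sqrt_one_sub_sq
    (fun y => prod_nonneg fun t _ => poissonPMF_nonneg (sq_nonneg (s t)) (y t))
    (fun y => prod_nonneg fun t _ => poissonPMF_nonneg (sq_nonneg (s' t)) (y t))
    (hasSum_prod_poissonPMF fun t => sq_nonneg (s t))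
    (hasSum_prod_poissonPMF fun t => sq_nonneg (s' t)) (hasSum_sqrt_prod_poissonPMF_mul hs hs')
  rw [hF2] at htv
  have hlt := sqrt_one_sub_exp_neg_lt hδ0 hδ1 (hr2 ▸ hclose)
  linarith

/-- If two reparametrized codewords are at squared Euclidean distance less
than `(2r)² = -ln(1-δ²)`, the corresponding product Poisson output laws have
total variation distance strictly less than `δ`. -/
theorem close_codewords_tv_lt (n : ℕ) (δ r : ℝ) (hδ0 : 0 < δ) (hδ1 : δ < 1)
    (hr : 0 < r) (hr2 : (2 * r) ^ 2 = -Real.log (1 - δ ^ 2))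
    (s s' : Fin n → ℝ) (hs : ∀ t, 0 ≤ s t) (hs' : ∀ t, 0 ≤ s' t)
    (hclose : ∑ t, (s t - s' t) ^ 2 < (2 * r) ^ 2) :
    (1 / 2) * ∑' y : Fin n → ℕ,
        |(∏ t, poissonPMF ((s t) ^ 2) (y t)) -
          ∏ t, poissonPMF ((s' t) ^ 2) (y t)| < δ :=
  close_codewords_tv_lt_general n δ r hδ0 hδ1 hr2 s s' hs hs' hclose
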